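/- Let $\omega_0, \omega_1 > 0$ with $\omega_1/\omega_0 \notin \mathbb{Q}$. Let $h : \mathbb{R} \to \mathbb{R}$ be continuous and $\frac{2\pi}{\omega_1}$-periodic with mean value zero, i.e. $\int_0^{2\pi/\omega_1} h(\tau)\, d\tau = 0$, let $\psi : \mathbb{R} \to \mathbb{R}$ be continuous and $\frac{2\pi}{\omega_0}$-periodic, and let $g : [0,T] \to \mathbb{R}$ be continuous, where $0 < T < \infty$. Then $\lim_{\varepsilon \to 0^+} \int_0^T g(t)\, h\!\left(\frac{t}{\varepsilon}\right) \psi\!\left(\frac{t}{\varepsilon}\right) dt = 0$. -/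

import Mathlib

/-! The product `h ψ` is a uniform limit of trigonometric sums `∑ c_ν exp (2πiνx)` whose
frequencies are `ν = n ω₁ / 2π + m ω₀ / 2π` with `n ≠ 0`: the mode `n = 0` can be dropped from
the approximations of `h` because `h` has mean zero. Irrationality of `ω₁ / ω₀` makes all these
frequencies nonzero, so each term contributes `∫ g(t) exp (2πiνt/ε) dt → 0` by the
Riemann–Lebesgue lemma. Since `|∫ g(t) F(t/ε) dt| ≤ ‖g‖₁ ‖F‖∞` uniformly in `ε`, the limit passes
from the trigonometric sums to their uniform closure. -/

open Real Filter Topology MeasureTheory BoundedContinuousFunction Submodule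

open scoped FourierTransform Pointwise

noncomputable def expMode (ν : ℝ) : ℝ →ᵇ ℂ :=
  .ofNormedAddCommGroup (fun x => 𝐞 (ν * x)) (by fun_prop) 1 fun _ => (Circle.norm_coe _).le

@[simp]
lemma expMode_apply (ν x : ℝ) : expMode ν x = 𝐞 (ν * x) := rfl

lemma expMode_mul (ν ν' : ℝ) : expMode ν * expMode ν' = expMode (ν + ν') := by
  ext x
  simp [add_mul, AddChar.map_add_eq_mul]

lemma mul_mem_closure_span_expMode {A B C : Set ℝ} (hABC : A + B ⊆ C) {F G : ℝ →ᵇ ℂ}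
    (hF : F ∈ (span ℂ (expMode '' A)).topologicalClosure)
    (hG : G ∈ (span ℂ (expMode '' B)).topologicalClosure) :
    F * G ∈ (span ℂ (expMode '' C)).topologicalClosure := by
  have hspan : span ℂ (expMode '' A) * span ℂ (expMode '' B) ≤ span ℂ (expMode '' C) := by
    rw [span_mul_span]
    refine span_mono ?_
    rintro _ ⟨_, ⟨a, ha, rfl⟩, _, ⟨b, hb, rfl⟩, rfl⟩
    exact ⟨a + b, hABC (Set.add_mem_add ha hb), (expMode_mul a b).symm⟩
  rw [← SetLike.mem_coe, topologicalClosure_coe] at hF hG ⊢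
  exact map_mem_closure₂ continuous_mul hF hG fun F hF G hG => hspan (mul_mem_mul hF hG)

namespace AddCircle

variable (P : ℝ) [Fact (0 < P)]

noncomputable def compCoeCLM : C(AddCircle P, ℂ) →L[ℂ] ℝ →ᵇ ℂ :=
  compContinuousCLM ℂ ℂ ⟨((↑) : ℝ → AddCircle P), continuous_quotient_mk'⟩ ∘L
    (ContinuousMap.linearIsometryBoundedOfCompact (AddCircle P) ℂ ℂ).toContinuousLinearEquiv

variable {P}

@[simp]
lemma compCoeCLM_apply (F : C(AddCircle P, ℂ)) (x : ℝ) : compCoeCLM P F x = F x := rfl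

lemma compCoeCLM_fourier (n : ℤ) : compCoeCLM P (fourier n) = expMode (n / P) := by
  ext x
  rw [compCoeCLM_apply, fourier_coe_apply, expMode_apply, Real.fourierChar_apply]
  push_cast
  ring_nf

lemma compCoeCLM_mem_closure_span {s : Set ℤ} {F : C(AddCircle P, ℂ)}
    (hF : F ∈ (span ℂ (fourier '' s)).topologicalClosure) :
    compCoeCLM P F ∈
      (span ℂ (expMode '' ((fun n : ℤ => (n : ℝ) / P) '' s))).topologicalClosure := by
  have hmap : (span ℂ (fourier '' s)).map (compCoeCLM P : C(AddCircle P, ℂ) →ₗ[ℂ] ℝ →ᵇ ℂ) =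
      span ℂ (expMode '' ((fun n : ℤ => (n : ℝ) / P) '' s)) := by
    rw [map_span, Set.image_image, Set.image_image]
    simp only [ContinuousLinearMap.coe_coe, compCoeCLM_fourier]
  rw [← hmap]
  exact topologicalClosure_map _ _ (mem_map_of_mem hF)

noncomputable def fourierCoeffCLM (n : ℤ) : C(AddCircle P, ℂ) →L[ℂ] ℂ :=
  LinearMap.mkContinuous
    { toFun F := fourierCoeff F n
      map_add' F G := congrFun (fourierCoeff.add
        (F.continuous.integrable_of_hasCompactSupport (.of_compactSpace _))
        (G.continuous.integrable_of_hasCompactSupport (.of_compactSpace _))) n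
      map_smul' c F := fourierCoeff.const_smul F c n }
    1 fun F => by
      change ‖fourierCoeff F n‖ ≤ 1 * ‖F‖
      refine (norm_integral_le_of_norm_le_const (C := ‖F‖) (.of_forall fun t => ?_)).trans
        (by simp)
      rw [norm_smul, fourier_apply, Circle.norm_coe, one_mul]
      exact F.norm_coe_le_norm t

@[simp]
lemma fourierCoeffCLM_apply (n : ℤ) (F : C(AddCircle P, ℂ)) :
    fourierCoeffCLM n F = fourierCoeff F n := rfl

lemma mem_closure_span_fourier_of_fourierCoeff_zero {F : C(AddCircle P, ℂ)}
    (hF : fourierCoeff F 0 = 0) :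
    F ∈ (span ℂ (fourier '' {n | n ≠ 0})).topologicalClosure := by
  -- `π₀` deletes the constant mode: it fixes `F` and maps trigonometric polynomials to
  -- trigonometric polynomials without constant term.
  let π₀ := ContinuousLinearMap.id ℂ _ - (fourierCoeffCLM 0).smulRight (fourier (T := P) 0)
  have hπ₀F : π₀ F = F := by simp [π₀, hF]
  have hπ₀ : span ℂ (Set.range (fourier (T := P))) ≤
      (span ℂ (fourier (T := P) '' {n | n ≠ 0})).comap (π₀ : _ →ₗ[ℂ] _) := by
    refine span_le.2 ?_
    rintro _ ⟨n, rfl⟩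
    by_cases hn : n = 0
    · simp [π₀, hn, fourierCoeff_fourier]
    · simpa [π₀, fourierCoeff_fourier, hn] using
        (subset_span ⟨n, hn, rfl⟩ : fourier n ∈ span ℂ (fourier (T := P) '' {n | n ≠ 0}))
  have hFtop : F ∈ (span ℂ (Set.range fourier)).topologicalClosure := by
    rw [span_fourier_closure_eq_top]; trivial
  rw [← hπ₀F]
  exact topologicalClosure_mono (map_le_iff_le_comap.2 hπ₀)
    (topologicalClosure_map π₀ _ (mem_map_of_mem hFtop))

end AddCircle

lemma Function.Periodic.exists_addCircle_lift {X : Type*} [TopologicalSpace X] {P : ℝ}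
    {f : ℝ → X} (hf : Continuous f) (hper : Function.Periodic f P) :
    ∃ F : C(AddCircle P, X), ∀ x : ℝ, F x = f x :=
  ⟨⟨hper.lift, continuous_coinduced_dom.2 hf⟩, fun _ => rfl⟩

lemma exists_bcf_mem_closure_span_expMode {P : ℝ} (hP : 0 < P) {f : ℝ → ℂ}
    (hf : Continuous f) (hper : Function.Periodic f P) :
    ∃ F : ℝ →ᵇ ℂ, (∀ x, F x = f x) ∧
      F ∈ (span ℂ (expMode '' ((fun n : ℤ => (n : ℝ) / P) '' Set.univ))).topologicalClosure := by
  have : Fact (0 < P) := ⟨hP⟩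
  obtain ⟨F, hF⟩ := hper.exists_addCircle_lift hf
  refine ⟨AddCircle.compCoeCLM P F, hF, AddCircle.compCoeCLM_mem_closure_span ?_⟩
  rw [Set.image_univ, span_fourier_closure_eq_top]
  trivial

lemma exists_bcf_mem_closure_span_expMode_of_integral_eq_zero {P : ℝ} (hP : 0 < P)
    {f : ℝ → ℂ} (hf : Continuous f) (hper : Function.Periodic f P)
    (hmean : ∫ x in (0 : ℝ)..P, f x = 0) :
    ∃ F : ℝ →ᵇ ℂ, (∀ x, F x = f x) ∧
      F ∈ (span ℂ (expMode '' ((fun n : ℤ => (n : ℝ) / P) '' {n | n ≠ 0}))).topologicalClosure := by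
  have : Fact (0 < P) := ⟨hP⟩
  obtain ⟨F, hF⟩ := hper.exists_addCircle_lift hf
  refine ⟨AddCircle.compCoeCLM P F, hF, AddCircle.compCoeCLM_mem_closure_span
    (AddCircle.mem_closure_span_fourier_of_fourierCoeff_zero ?_)⟩
  simp [fourierCoeff_eq_intervalIntegral F 0 0, hF, hmean]

lemma div_add_div_ne_zero_of_irrational {P₀ P₁ : ℝ} (hirr : Irrational (P₀ / P₁)) {n : ℤ}
    (hn : n ≠ 0) (m : ℤ) : (n : ℝ) / P₁ + m / P₀ ≠ 0 := by
  have hP₀ : P₀ ≠ 0 := by rintro rfl; simp at hirr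
  have hP₁ : P₁ ≠ 0 := by rintro rfl; simp at hirr
  intro h
  refine hirr ⟨-m / n, ?_⟩
  field_simp at h
  push_cast
  field_simp
  linarith

lemma tendsto_const_div_nhdsGT_zero_cocompact {c : ℝ} (hc : c ≠ 0) :
    Tendsto (fun ε : ℝ => c / ε) (𝓝[>] 0) (cocompact ℝ) := by
  rw [← Metric.cobounded_eq_cocompact]
  exact (tendsto_mul_left_cobounded hc).comp
    (tendsto_inv₀_nhdsNE_zero.mono_left (nhdsGT_le_nhdsNE 0))

lemma tendsto_integral_mul_expMode_rescaled (g : ℝ → ℂ) {ν : ℝ} (hν : ν ≠ 0) :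
    Tendsto (fun ε => ∫ t, g t * expMode ν (t / ε)) (𝓝[>] 0) (𝓝 0) := by
  refine ((Real.tendsto_integral_exp_smul_cocompact g).comp
    (tendsto_const_div_nhdsGT_zero_cocompact (neg_ne_zero.2 hν))).congr fun ε => ?_
  refine integral_congr_ae (.of_forall fun t => ?_)
  simp only [Circle.smul_def, smul_eq_mul, expMode_apply]
  rw [mul_comm]
  ring_nf

section Rescaled

variable {g : ℝ → ℂ}

lemma integrable_mul_rescaled (hg : Integrable g) (F : ℝ →ᵇ ℂ) (ε : ℝ) :
    Integrable fun t => g t * F (t / ε) :=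
  hg.mul_bdd (F.continuous.comp (continuous_id.div_const ε)).aestronglyMeasurable
    (.of_forall fun _ => F.norm_coe_le_norm _)

lemma norm_integral_mul_rescaled_le (hg : Integrable g) (F : ℝ →ᵇ ℂ) (ε : ℝ) :
    ‖∫ t, g t * F (t / ε)‖ ≤ (∫ t, ‖g t‖) * ‖F‖ := by
  rw [← integral_mul_const]
  refine norm_integral_le_of_norm_le (hg.norm.mul_const _) (.of_forall fun t => ?_)
  rw [norm_mul]
  exact mul_le_mul_of_nonneg_left (F.norm_coe_le_norm _) (norm_nonneg _)

noncomputable def rescaledIntegralCLM (hg : Integrable g) (ε : ℝ) : (ℝ →ᵇ ℂ) →L[ℂ] ℂ :=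
  LinearMap.mkContinuous
    { toFun F := ∫ t, g t * F (t / ε)
      map_add' F G := by
        simp only [BoundedContinuousFunction.coe_add, Pi.add_apply, mul_add]
        exact integral_add (integrable_mul_rescaled hg F ε) (integrable_mul_rescaled hg G ε)
      map_smul' c F := by
        simp only [BoundedContinuousFunction.coe_smul, smul_eq_mul, RingHom.id_apply,
          mul_left_comm (g _) c]
        exact integral_const_mul c _ }
    _ (norm_integral_mul_rescaled_le hg · ε)

lemma tendsto_integral_mul_rescaled_of_mem_closure (hg : Integrable g) {F : ℝ →ᵇ ℂ}
    (hF : F ∈ (span ℂ (expMode '' {ν | ν ≠ 0})).topologicalClosure) :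
    Tendsto (fun ε => ∫ t, g t * F (t / ε)) (𝓝[>] 0) (𝓝 0) := by
  let L := rescaledIntegralCLM hg
  let S : Submodule ℂ (ℝ →ᵇ ℂ) :=
    { carrier := {F | Tendsto (fun ε => L ε F) (𝓝[>] 0) (𝓝 0)}
      add_mem' := fun hF hG => by simpa using hF.add hG
      zero_mem' := by simp
      smul_mem' := fun c F hF => by simpa using hF.const_smul c }
  have hequi : Equicontinuous ((↑) ∘ L) :=
    ((NormedSpace.equicontinuous_TFAE L).out 1 3).2
      (⟨_, fun ε F => norm_integral_mul_rescaled_le hg F ε⟩ : ∃ C, ∀ ε F, ‖L ε F‖ ≤ C * ‖F‖)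
  have hS : IsClosed (S : Set (ℝ →ᵇ ℂ)) := hequi.isClosed_setOfPred_tendsto continuous_const
  have hspan : span ℂ (expMode '' {ν | ν ≠ 0}) ≤ S := by
    refine span_le.2 ?_
    rintro _ ⟨ν, hν, rfl⟩
    exact tendsto_integral_mul_expMode_rescaled g hν
  exact topologicalClosure_minimal _ hspan hS hF

end Rescaled

lemma tendsto_intervalIntegral_mul_rescaled_of_mem_closure {a b : ℝ} (hab : a ≤ b) {g f : ℝ → ℝ}
    (hg : ContinuousOn g (Set.Icc a b)) {F : ℝ →ᵇ ℂ} (hFf : ∀ x, F x = f x)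
    (hF : F ∈ (span ℂ (expMode '' {ν | ν ≠ 0})).topologicalClosure) :
    Tendsto (fun ε => ∫ t in a..b, g t * f (t / ε)) (𝓝[>] 0) (𝓝 0) := by
  have hG : Integrable ((Set.Ioc a b).indicator fun t => (g t : ℂ)) :=
    ((Complex.continuous_ofReal.comp_continuousOn hg).integrableOn_Icc.mono_set
      Set.Ioc_subset_Icc_self).integrable_indicator measurableSet_Ioc
  refine ((Complex.continuous_re.tendsto 0).comp
    (tendsto_integral_mul_rescaled_of_mem_closure hG hF)).congr fun ε => ?_
  have hpt : ∀ t, (Set.Ioc a b).indicator (fun t => (g t : ℂ)) t * F (t / ε) =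
      (Set.Ioc a b).indicator (fun t => ((g t * f (t / ε) : ℝ) : ℂ)) t := by
    intro t
    by_cases ht : t ∈ Set.Ioc a b <;> simp [ht, hFf]
  simp only [Function.comp_apply, hpt]
  rw [integral_indicator measurableSet_Ioc, integral_complex_ofReal, Complex.ofReal_re,
    intervalIntegral.integral_of_le hab]

/-- Non-resonant averaging: if `ω₁/ω₀` is irrational, `h` is continuous,
`2π/ω₁`-periodic with zero mean, `ψ` is continuous and `2π/ω₀`-periodic, and `g` is
continuous on `[0,T]`, then `∫₀ᵀ g(t) h(t/ε) ψ(t/ε) dt → 0` as `ε → 0⁺`. -/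
theorem stmt10 (ω₀ ω₁ : ℝ) (hω₀ : 0 < ω₀) (hω₁ : 0 < ω₁)
    (hirr : Irrational (ω₁ / ω₀))
    (h : ℝ → ℝ) (hh : Continuous h) (hhper : Function.Periodic h (2 * π / ω₁))
    (hhmean : ∫ τ in (0 : ℝ)..(2 * π / ω₁), h τ = 0)
    (ψ : ℝ → ℝ) (hψ : Continuous ψ) (hψper : Function.Periodic ψ (2 * π / ω₀))
    (T : ℝ) (hT : 0 < T)
    (g : ℝ → ℝ) (hg : ContinuousOn g (Set.Icc 0 T)) :
    Tendsto (fun ε : ℝ => ∫ t in (0 : ℝ)..T, g t * h (t / ε) * ψ (t / ε))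
      (𝓝[>] 0) (𝓝 0) := by
  obtain ⟨H, hH, hHmem⟩ := exists_bcf_mem_closure_span_expMode_of_integral_eq_zero
    (f := fun x => (h x : ℂ)) (by positivity) (by fun_prop)
    (fun x => congrArg Complex.ofReal (hhper x))
    (by simp [intervalIntegral.integral_ofReal, hhmean])
  obtain ⟨Ψ, hΨ, hΨmem⟩ := exists_bcf_mem_closure_span_expMode (f := fun x => (ψ x : ℂ))
    (by positivity) (by fun_prop) (fun x => congrArg Complex.ofReal (hψper x))
  have hnonres : (fun n : ℤ => (n : ℝ) / (2 * π / ω₁)) '' {n | n ≠ 0} +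
      (fun m : ℤ => (m : ℝ) / (2 * π / ω₀)) '' Set.univ ⊆ {ν | ν ≠ 0} := by
    rintro _ ⟨_, ⟨n, hn, rfl⟩, _, ⟨m, -, rfl⟩, rfl⟩
    refine div_add_div_ne_zero_of_irrational ?_ hn m
    rwa [div_div_div_cancel_left' _ _ two_pi_pos.ne']
  simpa only [mul_assoc] using tendsto_intervalIntegral_mul_rescaled_of_mem_closure hT.le hg
    (f := fun x => h x * ψ x) (fun x => by simp [hH, hΨ])
    (mul_mem_closure_span_expMode hnonres hHmem hΨmem)
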